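/- Let G be a 2-edge-connected, non-regular finite graph (multiple edges allowed, no loops), let F be a weak 2-factor of G, let w ∈ V(G) and λ ∈ {0,1}. Let T be a good weakly even (w,λ)-tree in G of maximum order, with (w,λ)-bipartition (X₀,Y₀), and suppose V(T) ≠ V(G). Suppose y₀z is an edge of G with y₀ ∈ Y₀ and z ∉ V(T). Then the component C of F containing z is an even cycle; moreover, if (X,Y) is the bipartition of C in which z ∈ X, then every vertex of Y has degree Δ(G) in G and Y is an independent set in G. -/

import Mathlib

/-!
Let `C` be the component of `F` containing `z`. A weakly even tree on `C` in which `z` has type 0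
could be hung from `y₀` by the edge `y₀z`, giving a good weakly even `(w, λ)`-tree larger than
`T`; so no such tree exists. If `C` were a path, then `C` itself, with either bipartition, would be
one, because the ends of a path component have degree less than `Δ(G)`. Hence `C` is a cycle.
Deleting an edge at `z` from an odd cycle leaves a path whose two ends have the type of `z`;
deleting an edge at a type-1 vertex `v` of degree less than `Δ(G)` leaves a path with ends `v`
and a type-0 vertex; and if an edge `uv` of `G` joined two type-1 vertices, replacing the two
cycle edges at `u` by `uv` and moving `u` to type 0 gives a tree all of whose leaves have type 0.
-/

/-- A multigraph on vertex type `V` with edge type `E`: each edge is assigned an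
unordered pair of distinct endpoints (multiple edges allowed, no loops). -/
structure Multigraph (V : Type) (E : Type) where
  inc : E → Sym2 V
  loopless : ∀ e : E, ¬ (inc e).IsDiag

namespace Multigraph

variable {V E : Type}

/-- `u` and `v` are joined by an edge belonging to the edge set `S`. -/
def AdjOn (G : Multigraph V E) (S : Set E) (u v : V) : Prop :=
  ∃ e ∈ S, G.inc e = s(u, v)

/-- `v` is reachable from `u` using edges in `S`. -/
def ReachOn (G : Multigraph V E) (S : Set E) (u v : V) : Prop :=
  Relation.ReflTransGen (G.AdjOn S) u v

/-- `G` is connected. -/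
def Connected (G : Multigraph V E) : Prop :=
  Nonempty V ∧ ∀ u v : V, G.ReachOn Set.univ u v

/-- The degree of `v` in the spanning subgraph with edge set `S`. -/
noncomputable def degOn (G : Multigraph V E) (S : Set E) (v : V) : ℕ :=
  {e ∈ S | v ∈ G.inc e}.ncard

/-- The degree of `v` in `G`. -/
noncomputable def degree (G : Multigraph V E) (v : V) : ℕ :=
  G.degOn Set.univ v

/-- The maximum degree `Δ(G)`. -/
noncomputable def maxDegree (G : Multigraph V E) [Fintype V] : ℕ :=
  Finset.univ.sup G.degree

/-- `G` is regular. -/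
def IsRegular (G : Multigraph V E) : Prop :=
  ∃ r : ℕ, ∀ v : V, G.degree v = r

/-- The 2-colouring `c` is proper on the edge set `S`: the two endpoints of any
edge of `S` receive different colours. -/
def ProperOn (G : Multigraph V E) (S : Set E) (c : V → Bool) : Prop :=
  ∀ e ∈ S, ∀ u v : V, G.inc e = s(u, v) → c u ≠ c v

/-- `G` is bipartite. -/
def IsBipartite (G : Multigraph V E) : Prop :=
  ∃ c : V → Bool, G.ProperOn Set.univ c

/-- The sub-multigraph of `G` with vertex set `U` and edge set `S` is a tree:
`U` is nonempty, every edge of `S` joins vertices of `U`, any two vertices of `U`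
are joined by a walk using edges of `S`, and there are exactly `|U| - 1` edges
(which forces acyclicity, and in particular forbids parallel edges in `S`). -/
structure IsTree (G : Multigraph V E) (U : Set V) (S : Set E) : Prop where
  nonempty : U.Nonempty
  edges_in : ∀ e ∈ S, ∀ v : V, v ∈ G.inc e → v ∈ U
  conn : ∀ u ∈ U, ∀ v ∈ U, G.ReachOn S u v
  card_eq : S.ncard + 1 = U.ncard

/-- `v` is a leaf of the subgraph with edge set `S`. -/
def IsLeaf (G : Multigraph V E) (S : Set E) (v : V) : Prop :=
  G.degOn S v = 1

/-- `e` is a cutedge: after removing `e`, some pair of vertices is separated. -/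
def IsCutedge (G : Multigraph V E) (e : E) : Prop :=
  ∃ u v : V, ¬ G.ReachOn {e}ᶜ u v

/-- `G` is 2-edge-connected: connected and without cutedges. -/
def TwoEdgeConnected (G : Multigraph V E) : Prop :=
  G.Connected ∧ ∀ e : E, ¬ G.IsCutedge e

/-- The edge set `S` is a weak 2-factor of `G`: every vertex has degree at most
2 in `S` (equivalently, every component of the spanning subgraph is a path —
possibly a single vertex — or a cycle), and every vertex of degree less than 2
in `S` (i.e. every endvertex of a path component) has degree less than `Δ(G)`
in `G`. -/
def IsWeakTwoFactor (G : Multigraph V E) [Fintype V] (S : Set E) : Prop :=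
  ∀ v : V, G.degOn S v ≤ 2 ∧ (G.degOn S v < 2 → G.degree v < G.maxDegree)

end Multigraph

namespace Multigraph

variable {V E : Type} {G : Multigraph V E}

lemma ne_of_inc_eq {e : E} {a b : V} (h : G.inc e = s(a, b)) : a ≠ b := fun hab =>
  G.loopless e (by rw [h, hab]; exact Sym2.mk_isDiag_iff.mpr rfl)

lemma exists_inc_eq_of_mem {e : E} {u : V} (hu : u ∈ G.inc e) : ∃ a, G.inc e = s(u, a) :=
  ⟨Sym2.Mem.other hu, (Sym2.other_spec hu).symm⟩

section Reach

variable {S T : Set E} {u v x y : V}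

lemma AdjOn.symm (h : G.AdjOn S u v) : G.AdjOn S v u :=
  let ⟨e, he, huv⟩ := h
  ⟨e, he, huv.trans Sym2.eq_swap⟩

lemma AdjOn.reachOn (h : G.AdjOn S u v) : G.ReachOn S u v := Relation.ReflTransGen.single h

lemma ReachOn.refl : G.ReachOn S u u := Relation.ReflTransGen.refl

lemma ReachOn.trans (h₁ : G.ReachOn S u v) (h₂ : G.ReachOn S v x) : G.ReachOn S u x :=
  Relation.ReflTransGen.trans h₁ h₂

lemma ReachOn.symm (h : G.ReachOn S u v) : G.ReachOn S v u := by
  induction h with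
  | refl => exact .refl
  | tail _ hbc ih => exact Relation.ReflTransGen.head hbc.symm ih

lemma ReachOn.mono (hST : S ⊆ T) (h : G.ReachOn S u v) : G.ReachOn T u v :=
  Relation.ReflTransGen.mono (r := G.AdjOn S) (p := G.AdjOn T)
    (fun _ _ ⟨e, he, h⟩ => ⟨e, hST he, h⟩) _ _ h

lemma ReachOn.exists_crossing {B : Set V} (h : G.ReachOn S u v) (hu : u ∈ B) (hv : v ∉ B) :
    ∃ e ∈ S, ∃ p ∈ B, ∃ q ∉ B, G.inc e = s(p, q) := by
  induction h with
  | refl => exact absurd hu hv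
  | @tail b c _ hbc ih =>
    by_cases hb : b ∈ B
    · obtain ⟨e, he, hinc⟩ := hbc
      exact ⟨e, he, b, hb, c, hv, hinc⟩
    · exact ih hb

lemma ReachOn.sdiff_singleton_or {f : E} (hf : G.inc f = s(x, y)) (h : G.ReachOn S x v) :
    G.ReachOn (S \ {f}) x v ∨ G.ReachOn (S \ {f}) y v := by
  induction h with
  | refl => exact .inl .refl
  | @tail b c _ hbc ih =>
    obtain ⟨e, he, hinc⟩ := hbc
    by_cases hef : e = f
    · subst hef
      rcases Sym2.eq_iff.mp (hf.symm.trans hinc) with ⟨-, rfl⟩ | ⟨rfl, -⟩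
      · exact .inr .refl
      · exact .inl .refl
    · have hbc : G.ReachOn (S \ {f}) b c := AdjOn.reachOn ⟨e, ⟨he, hef⟩, hinc⟩
      exact ih.imp (·.trans hbc) (·.trans hbc)

lemma ReachOn.sdiff_singleton_of_reachOn {f : E} (h : G.ReachOn S u v) (hf : G.inc f = s(x, y))
    (hxy : G.ReachOn (S \ {f}) x y) : G.ReachOn (S \ {f}) u v := by
  induction h with
  | refl => exact .refl
  | @tail b c _ hbc ih =>
    obtain ⟨e, he, hinc⟩ := hbc
    by_cases hef : e = f
    · subst hef
      rcases Sym2.eq_iff.mp (hf.symm.trans hinc) with ⟨rfl, rfl⟩ | ⟨rfl, rfl⟩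
      · exact ih.trans hxy
      · exact ih.trans hxy.symm
    · exact ih.trans (AdjOn.reachOn ⟨e, ⟨he, hef⟩, hinc⟩)

end Reach

section Degree

variable {S T : Set E} {e : E} {v : V}

lemma degOn_congr (h : ∀ e, v ∈ G.inc e → (e ∈ S ↔ e ∈ T)) : G.degOn S v = G.degOn T v := by
  unfold degOn
  congr 1
  ext e
  exact ⟨fun ⟨he, hv⟩ => ⟨(h e hv).1 he, hv⟩, fun ⟨he, hv⟩ => ⟨(h e hv).2 he, hv⟩⟩

lemma exists_mem_of_degOn_pos (h : 0 < G.degOn S v) : ∃ e ∈ S, v ∈ G.inc e :=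
  Set.nonempty_of_ncard_ne_zero h.ne'

lemma degOn_sdiff_singleton_of_notMem (hv : v ∉ G.inc e) : G.degOn (S \ {e}) v = G.degOn S v :=
  degOn_congr fun f hf => ⟨fun h => h.1, fun h => ⟨h, by rintro rfl; exact hv hf⟩⟩

variable [Finite E]

lemma degOn_mono (h : S ⊆ T) : G.degOn S v ≤ G.degOn T v :=
  Set.ncard_le_ncard fun _ he => ⟨h he.1, he.2⟩

lemma exists_mem_notMem_of_degOn_lt (h : G.degOn S v < G.degOn T v) :
    ∃ e ∈ T, e ∉ S ∧ v ∈ G.inc e := by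
  by_contra! h'
  exact h.not_ge (Set.ncard_le_ncard fun e ⟨heT, hv⟩ => ⟨by_contra fun hS => h' e heT hS hv, hv⟩)

lemma degOn_insert (he : e ∉ S) (hv : v ∈ G.inc e) :
    G.degOn (insert e S) v = G.degOn S v + 1 := by
  unfold degOn
  rw [← Set.ncard_insert_of_notMem fun h => he h.1]
  congr 1
  ext f
  simp only [Set.mem_insert_iff]
  constructor
  · rintro ⟨rfl | hf, hvf⟩
    exacts [.inl rfl, .inr ⟨hf, hvf⟩]
  · rintro (rfl | ⟨hf, hvf⟩)
    exacts [⟨.inl rfl, hv⟩, ⟨.inr hf, hvf⟩]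

lemma degOn_sdiff_singleton_add_one (he : e ∈ S) (hv : v ∈ G.inc e) :
    G.degOn (S \ {e}) v + 1 = G.degOn S v := by
  rw [← degOn_insert (fun h => h.2 rfl) hv, Set.insert_sdiff_singleton, Set.insert_eq_of_mem he]

lemma degOn_eq_zero_iff : G.degOn S v = 0 ↔ ∀ x, G.ReachOn S v x → x = v := by
  constructor
  · intro h0 x hx
    rcases Relation.ReflTransGen.cases_head hx with rfl | ⟨c, ⟨e, he, hinc⟩, -⟩
    · rfl
    · exact absurd h0 (Set.ncard_ne_zero_of_mem (s := {e ∈ S | v ∈ G.inc e}) ⟨he, by simp [hinc]⟩)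
  · intro h
    by_contra h0
    obtain ⟨e, he, hv⟩ := exists_mem_of_degOn_pos (Nat.pos_of_ne_zero h0)
    obtain ⟨a, ha⟩ := exists_inc_eq_of_mem hv
    exact ne_of_inc_eq ha (h a (AdjOn.reachOn ⟨e, he, ha⟩)).symm

lemma sum_degOn_eq_two_mul_ncard (A : Finset V) (hA : ∀ e ∈ S, ∀ v ∈ G.inc e, v ∈ A) :
    ∑ v ∈ A, G.degOn S v = 2 * S.ncard := by
  classical
  set T := (Set.toFinite S).toFinset
  have hdeg : ∀ v, G.degOn S v = Finset.card (T.bipartiteAbove (fun v e => v ∈ G.inc e) v) := by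
    intro v
    rw [degOn, ← Set.ncard_coe_finset]
    congr 1
    ext e
    simp [T, Finset.bipartiteAbove]
  have hends : ∀ e ∈ T, Finset.card (A.bipartiteBelow (fun v e => v ∈ G.inc e) e) = 2 := by
    intro e he
    rw [Finset.mem_coe.symm, Set.Finite.coe_toFinset] at he
    rw [← Sym2.card_toFinset_of_not_isDiag _ (G.loopless e)]
    congr 1
    ext v
    simpa [Finset.bipartiteBelow, Sym2.mem_toFinset] using hA e he v
  rw [Finset.sum_congr rfl fun v _ => hdeg v,
    Finset.sum_card_bipartiteAbove_eq_sum_card_bipartiteBelow, Finset.sum_congr rfl hends,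
    Finset.sum_const, smul_eq_mul, Set.ncard_eq_toFinset_card S, mul_comm]

end Degree

section Component

variable {S : Set E} {z u v : V} {e : E}

def componentEdges (G : Multigraph V E) (S : Set E) (z : V) : Set E :=
  {e ∈ S | ∃ v ∈ G.inc e, G.ReachOn S z v}

lemma reachOn_of_mem_componentEdges (he : e ∈ G.componentEdges S z) (hv : v ∈ G.inc e) :
    G.ReachOn S z v := by
  obtain ⟨heS, u, hu, hzu⟩ := he
  rcases eq_or_ne u v with rfl | huv
  · exact hzu
  · exact hzu.trans (AdjOn.reachOn ⟨e, heS, ((Sym2.mem_and_mem_iff huv).1 ⟨hu, hv⟩)⟩)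

lemma ReachOn.componentEdges (h : G.ReachOn S z v) : G.ReachOn (G.componentEdges S z) z v := by
  induction h with
  | refl => exact .refl
  | @tail b c hzb hbc ih =>
    obtain ⟨e, he, hinc⟩ := hbc
    exact ih.trans (AdjOn.reachOn ⟨e, ⟨he, b, by simp [hinc], hzb⟩, hinc⟩)

lemma reachOn_componentEdges (hu : G.ReachOn S z u) (hv : G.ReachOn S z v) :
    G.ReachOn (G.componentEdges S z) u v :=
  hu.componentEdges.symm.trans hv.componentEdges

lemma degOn_componentEdges (hv : G.ReachOn S z v) :
    G.degOn (G.componentEdges S z) v = G.degOn S v :=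
  degOn_congr fun _ he => ⟨fun h => h.1, fun h => ⟨h, v, he, hv⟩⟩

lemma properOn_componentEdges_iff {d : V → Bool} :
    G.ProperOn (G.componentEdges S z) d ↔
      ∀ e ∈ S, ∀ u v : V, G.inc e = s(u, v) → u ∈ {x | G.ReachOn S z x} → d u ≠ d v := by
  constructor
  · exact fun hd e he u v huv hu => hd e ⟨he, u, by simp [huv], hu⟩ u v huv
  · rintro hd e ⟨he, a, ha, hza⟩ u v huv
    rw [huv, Sym2.mem_iff] at ha
    rcases ha with rfl | rfl
    · exact hd e he a v huv hza
    · exact (hd e he a u (huv.trans Sym2.eq_swap) hza).symm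

lemma exists_odd_degOn_of_odd [Finite V] [Finite E] {x : V} (hx : Odd (G.degOn S x)) :
    ∃ y ≠ x, Odd (G.degOn S y) ∧ G.ReachOn S x y := by
  classical
  set A := (Set.toFinite {y | G.ReachOn S x y}).toFinset
  have hxA : x ∈ A := by simp [A, ReachOn.refl]
  have hsum : Even (∑ y ∈ A, G.degOn S y) := by
    rw [Finset.sum_congr rfl fun y hy => (degOn_componentEdges (by simpa [A] using hy)).symm,
      sum_degOn_eq_two_mul_ncard A fun e he y hy => by
        simpa [A] using reachOn_of_mem_componentEdges he hy]
    exact even_two_mul _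
  rw [Finset.even_sum_iff_even_card_odd] at hsum
  have hx' : x ∈ A.filter fun y => Odd (G.degOn S y) := Finset.mem_filter.2 ⟨hxA, hx⟩
  have hcard : 1 < (A.filter fun y => Odd (G.degOn S y)).card := by
    obtain ⟨r, hr⟩ := hsum
    have := Finset.card_ne_zero_of_mem hx'
    omega
  obtain ⟨y, hy, hyx⟩ := Finset.exists_mem_ne hcard x
  obtain ⟨hyA, hy⟩ := Finset.mem_filter.1 hy
  exact ⟨y, hyx, hy, by simpa [A] using hyA⟩

end Component

section Tree

variable {A B : Set V} {S T : Set E} {d : V → Bool} {u p v : V} {e f : E}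

lemma ProperOn.mono (hd : G.ProperOn S d) (hTS : T ⊆ S) : G.ProperOn T d :=
  fun e he => hd e (hTS he)

lemma ProperOn.insert (hd : G.ProperOn S d) (hf : G.inc f = s(u, p)) (hup : d u ≠ d p) :
    G.ProperOn (insert f S) d := by
  rintro e (rfl | he) a b hab
  · rcases Sym2.eq_iff.1 (hf.symm.trans hab) with ⟨rfl, rfl⟩ | ⟨rfl, rfl⟩
    exacts [hup, hup.symm]
  · exact hd e he a b hab

lemma ProperOn.update [DecidableEq V] (hd : G.ProperOn S d) (hu : ∀ e ∈ S, u ∉ G.inc e)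
    (b : Bool) : G.ProperOn S (Function.update d u b) := by
  intro e he a a' haa'
  have ha : a ≠ u := by rintro rfl; exact hu e he (by simp [haa'])
  have ha' : a' ≠ u := by rintro rfl; exact hu e he (by simp [haa'])
  simpa [Function.update_of_ne ha, Function.update_of_ne ha'] using hd e he a a' haa'

lemma ProperOn.union_piecewise [DecidablePred (· ∈ B)] {c : V → Bool} (hc : G.ProperOn S c)
    (hd : G.ProperOn T d) (hS : ∀ e ∈ S, ∀ v ∈ G.inc e, v ∉ B)
    (hT : ∀ e ∈ T, ∀ v ∈ G.inc e, v ∈ B) :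
    G.ProperOn (S ∪ T) (B.piecewise d c) := by
  rintro e (he | he) a a' haa'
  · rw [Set.piecewise_eq_of_notMem _ _ _ (hS e he a (by simp [haa'])),
      Set.piecewise_eq_of_notMem _ _ _ (hS e he a' (by simp [haa']))]
    exact hc e he a a' haa'
  · rw [Set.piecewise_eq_of_mem _ _ _ (hT e he a (by simp [haa'])),
      Set.piecewise_eq_of_mem _ _ _ (hT e he a' (by simp [haa']))]
    exact hd e he a a' haa'

lemma IsTree.mem_of_isLeaf (hT : G.IsTree A S) (hv : G.IsLeaf S v) : v ∈ A := by
  obtain ⟨e, he, hve⟩ := exists_mem_of_degOn_pos (v := v) (S := S) (by rw [hv]; exact one_pos)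
  exact hT.edges_in e he v hve

lemma IsTree.degOn_eq_zero_of_closed [Finite E] {F : Set E} (hT : G.IsTree A S)
    (hA : ∀ u ∈ A, ∀ v, G.ReachOn F u v → v ∈ A) (hu : u ∈ A) (h0 : G.degOn S u = 0) :
    G.degOn F u = 0 :=
  degOn_eq_zero_iff.2 fun v hv => degOn_eq_zero_iff.1 h0 v (hT.conn u hu v (hA u hu v hv))

variable [Finite V] [Finite E]

lemma IsTree.attach (hT : G.IsTree A S) (hu : u ∉ A) (hf : G.inc f = s(p, u)) (hp : p ∈ A) :
    G.IsTree (insert u A) (insert f S) := by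
  have hfS : f ∉ S := fun h => hu (hT.edges_in f h u (by simp [hf]))
  have hreach : ∀ v ∈ insert u A, G.ReachOn (insert f S) p v := by
    rintro v (rfl | hv)
    · exact AdjOn.reachOn ⟨f, Set.mem_insert f S, hf⟩
    · exact (hT.conn p hp v hv).mono (Set.subset_insert f S)
  refine ⟨⟨u, Set.mem_insert u A⟩, ?_, fun a ha b hb => (hreach a ha).symm.trans (hreach b hb), ?_⟩
  · rintro e (rfl | he) v hv
    · rw [hf, Sym2.mem_iff] at hv
      rcases hv with rfl | rfl
      exacts [.inr hp, .inl rfl]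
    · exact .inr (hT.edges_in e he v hv)
  · rw [Set.ncard_insert_of_notMem hfS, Set.ncard_insert_of_notMem hu, hT.card_eq]

lemma IsTree.sdiff_leaf (hT : G.IsTree A S) (hf : f ∈ S) (hu : u ∈ G.inc f)
    (hleaf : G.IsLeaf S u) : G.IsTree (A \ {u}) (S \ {f}) := by
  obtain ⟨p, hfp⟩ := exists_inc_eq_of_mem hu
  have huA : u ∈ A := hT.edges_in f hf u hu
  have h0 : G.degOn (S \ {f}) u = 0 := by
    have := degOn_sdiff_singleton_add_one hf hu
    rw [show G.degOn S u = 1 from hleaf] at this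
    omega
  have hreach : ∀ v ∈ A \ {u}, G.ReachOn (S \ {f}) p v := fun v hv =>
    ((hT.conn u huA v hv.1).sdiff_singleton_or hfp).resolve_left
      fun h => hv.2 (degOn_eq_zero_iff.1 h0 v h)
  refine ⟨⟨p, hT.edges_in f hf p (by simp [hfp]), (ne_of_inc_eq hfp).symm⟩,
    fun e he v hv => ⟨hT.edges_in e he.1 v hv, ?_⟩,
    fun a ha b hb => (hreach a ha).symm.trans (hreach b hb), ?_⟩
  · rintro rfl
    exact absurd h0 (Set.ncard_ne_zero_of_mem (s := {e ∈ S \ {f} | v ∈ G.inc e}) ⟨he, hv⟩)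
  · have := Set.ncard_sdiff_singleton_add_one hf
    have := Set.ncard_sdiff_singleton_add_one huA
    have := hT.card_eq
    omega

lemma IsTree.union_insert {U C : Set V} {y z : V} (hU : G.IsTree U S) (hC : G.IsTree C T)
    (hUC : Disjoint U C) (he : G.inc e = s(y, z)) (hy : y ∈ U) (hz : z ∈ C) :
    G.IsTree (U ∪ C) (insert e (S ∪ T)) := by
  have hST : Disjoint S T := Set.disjoint_left.2 fun g hgS hgT =>
    Set.disjoint_left.1 hUC (hU.edges_in g hgS _ (Sym2.out_fst_mem _))
      (hC.edges_in g hgT _ (Sym2.out_fst_mem _))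
  have heST : e ∉ S ∪ T := by
    rintro (h | h)
    · exact Set.disjoint_left.1 hUC (hU.edges_in e h z (by simp [he])) hz
    · exact Set.disjoint_left.1 hUC hy (hC.edges_in e h y (by simp [he]))
  have hreach : ∀ v ∈ U ∪ C, G.ReachOn (insert e (S ∪ T)) y v := by
    rintro v (hv | hv)
    · exact (hU.conn y hy v hv).mono fun g hg => .inr (.inl hg)
    · exact (AdjOn.reachOn ⟨e, Set.mem_insert _ _, he⟩).trans
        ((hC.conn z hz v hv).mono fun g hg => .inr (.inr hg))
  refine ⟨⟨y, .inl hy⟩, ?_, fun a ha b hb => (hreach a ha).symm.trans (hreach b hb), ?_⟩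
  · rintro g (rfl | hg | hg) v hv
    · rw [he, Sym2.mem_iff] at hv
      rcases hv with rfl | rfl
      exacts [.inl hy, .inr hz]
    · exact .inl (hU.edges_in g hg v hv)
    · exact .inr (hC.edges_in g hg v hv)
  · rw [Set.ncard_insert_of_notMem heST, Set.ncard_union_eq hST, Set.ncard_union_eq hUC]
    have := hU.card_eq
    have := hC.card_eq
    omega

/-- Growing a tree from `r` one crossing edge at a time. -/
lemma exists_isTree_properOn (hin : ∀ e ∈ S, ∀ v ∈ G.inc e, v ∈ A)
    (hconn : ∀ u ∈ A, ∀ v ∈ A, G.ReachOn S u v) {r : V} (hr : r ∈ A) (b : Bool) :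
    ∃ T ⊆ S, ∃ d : V → Bool, G.IsTree A T ∧ G.ProperOn T d ∧ d r = b := by
  classical
  suffices grow : ∀ (B : Set V) (T : Set E) (d : V → Bool), r ∈ B → B ⊆ A → T ⊆ S →
      G.IsTree B T → G.ProperOn T d → d r = b →
      ∃ T ⊆ S, ∃ d : V → Bool, G.IsTree A T ∧ G.ProperOn T d ∧ d r = b from
    grow {r} ∅ (fun _ => b) rfl (Set.singleton_subset_iff.2 hr) (Set.empty_subset S)
      ⟨⟨r, rfl⟩, fun _ h => h.elim, fun u hu v hv => hu ▸ hv ▸ .refl, by simp⟩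
      (fun _ h => h.elim) rfl
  intro B T d hrB hBA hTS hT hd hdr
  induction h : (A \ B).ncard using Nat.strong_induction_on generalizing B T d with
  | _ n ih =>
  by_cases hAB : A ⊆ B
  · exact ⟨T, hTS, d, hBA.antisymm hAB ▸ hT, hd, hdr⟩
  obtain ⟨u, huA, huB⟩ := Set.not_subset.1 hAB
  obtain ⟨f, hfS, p, hpB, q, hqB, hf⟩ := (hconn r hr u huA).exists_crossing hrB huB
  have hqA : q ∈ A := hin f hfS q (by simp [hf])
  have hrq : r ≠ q := by rintro rfl; exact hqB hrB
  have hlt : (A \ insert q B).ncard < n := h ▸ Set.ncard_lt_ncard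
    ((Set.ssubset_iff_of_subset (Set.sdiff_subset_sdiff_right (Set.subset_insert q B))).2
      ⟨q, ⟨hqA, hqB⟩, fun h => h.2 (Set.mem_insert q B)⟩)
  refine ih _ hlt (insert q B) (insert f T) (Function.update d q (!d p)) (.inr hrB)
    (Set.insert_subset hqA hBA) (Set.insert_subset hfS hTS) (hT.attach hqB hf hpB) ?_
    (by rw [Function.update_of_ne hrq, hdr]) rfl
  refine (hd.update (fun e he hq => hqB (hT.edges_in e he q hq)) _).insert hf ?_
  simp [Function.update_of_ne (ne_of_inc_eq hf)]

lemma IsTree.exists_properOn (hT : G.IsTree A S) {r : V} (hr : r ∈ A) (b : Bool) :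
    ∃ d : V → Bool, G.ProperOn S d ∧ d r = b := by
  obtain ⟨T, hTS, d, hT', hd, hdr⟩ := exists_isTree_properOn hT.edges_in hT.conn hr b
  have hST : S.ncard ≤ T.ncard := by have := hT.card_eq; have := hT'.card_eq; omega
  exact ⟨d, Set.eq_of_subset_of_ncard_le hTS hST ▸ hd, hdr⟩

/-- By the handshake lemma the component has fewer edges than vertices, so it is equal to any of
its spanning trees. -/
lemma isTree_component_of_degOn_lt_two {z v : V} (hS : ∀ v, G.degOn S v ≤ 2) (hv : G.ReachOn S z v)
    (hv2 : G.degOn S v < 2) : G.IsTree {x | G.ReachOn S z x} (G.componentEdges S z) := by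
  have hin : ∀ e ∈ G.componentEdges S z, ∀ x ∈ G.inc e, x ∈ {x | G.ReachOn S z x} :=
    fun _ he _ hx => reachOn_of_mem_componentEdges he hx
  obtain ⟨T, hTK, -, hT, -⟩ := exists_isTree_properOn hin
    (fun _ hu _ hv => reachOn_componentEdges hu hv) (ReachOn.refl : z ∈ {x | G.ReachOn S z x}) false
  suffices hle : (G.componentEdges S z).ncard ≤ T.ncard by
    rwa [← Set.eq_of_subset_of_ncard_le hTK hle]
  set C := (Set.toFinite {x | G.ReachOn S z x}).toFinset
  have hsum := sum_degOn_eq_two_mul_ncard C (by simpa [C] using hin)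
  have hlt : ∑ x ∈ C, G.degOn (G.componentEdges S z) x < ∑ x ∈ C, 2 :=
    Finset.sum_lt_sum (fun x hx => (degOn_componentEdges (by simpa [C] using hx)).trans_le (hS x))
      ⟨v, by simpa [C] using hv, (degOn_componentEdges hv).trans_lt hv2⟩
  rw [Finset.sum_const, smul_eq_mul, ← Set.ncard_eq_toFinset_card] at hlt
  have := hT.card_eq
  omega

end Tree

structure IsCycle (G : Multigraph V E) (A : Set V) (S : Set E) : Prop where
  edges_in : ∀ e ∈ S, ∀ v : V, v ∈ G.inc e → v ∈ A
  conn : ∀ u ∈ A, ∀ v ∈ A, G.ReachOn S u v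
  degOn_eq_two : ∀ v ∈ A, G.degOn S v = 2

section Cycle

variable {A : Set V} {S : Set E} {d : V → Bool} {z u v x y : V} {e f : E}

lemma isCycle_component (h : ∀ v ∈ {x | G.ReachOn S z x}, G.degOn S v = 2) :
    G.IsCycle {x | G.ReachOn S z x} (G.componentEdges S z) :=
  ⟨fun _ he _ hv => reachOn_of_mem_componentEdges he hv,
    fun _ hu _ hv => reachOn_componentEdges hu hv,
    fun v hv => (degOn_componentEdges hv).trans (h v hv)⟩

variable [Finite V] [Finite E]

lemma IsCycle.ncard_edges (hC : G.IsCycle A S) : S.ncard = A.ncard := by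
  have := sum_degOn_eq_two_mul_ncard (Set.toFinite A).toFinset (by simpa using hC.edges_in)
  rw [Finset.sum_congr rfl fun v hv => hC.degOn_eq_two v (by simpa using hv), Finset.sum_const,
    smul_eq_mul, ← Set.ncard_eq_toFinset_card] at this
  omega

/-- After deleting `f = xy`, the vertex `x` has odd degree, so its component contains another
vertex of odd degree, and only `y` qualifies. -/
lemma IsCycle.reachOn_sdiff_singleton (hC : G.IsCycle A S) (hf : f ∈ S) (hxy : G.inc f = s(x, y)) :
    G.ReachOn (S \ {f}) x y := by
  have hx : x ∈ G.inc f := by simp [hxy]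
  have hodd : Odd (G.degOn (S \ {f}) x) := by
    have := degOn_sdiff_singleton_add_one hf hx
    rw [hC.degOn_eq_two x (hC.edges_in f hf x hx)] at this
    exact ⟨0, by omega⟩
  obtain ⟨y', hy'x, hodd', hxy'⟩ := exists_odd_degOn_of_odd hodd
  obtain ⟨g, hg, hy'g⟩ := exists_mem_of_degOn_pos hodd'.pos
  have hy'f : y' ∈ G.inc f := by
    by_contra h
    rw [degOn_sdiff_singleton_of_notMem h, hC.degOn_eq_two y' (hC.edges_in g hg.1 y' hy'g)] at hodd'
    exact Nat.not_odd_iff_even.2 even_two hodd'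
  rw [hxy, Sym2.mem_iff] at hy'f
  exact hy'f.resolve_left hy'x ▸ hxy'

lemma IsCycle.isTree_sdiff_singleton (hC : G.IsCycle A S) (hf : f ∈ S) :
    G.IsTree A (S \ {f}) := by
  obtain ⟨y, hxy⟩ := exists_inc_eq_of_mem (Sym2.out_fst_mem (G.inc f))
  refine ⟨⟨_, hC.edges_in f hf _ (Sym2.out_fst_mem _)⟩, fun e he => hC.edges_in e he.1,
    fun u hu v hv => (hC.conn u hu v hv).sdiff_singleton_of_reachOn hxy
      (hC.reachOn_sdiff_singleton hf hxy), ?_⟩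
  rw [← hC.ncard_edges, Set.ncard_sdiff_singleton_add_one hf]

lemma IsCycle.exists_isTree_sdiff_singleton (hC : G.IsCycle A S) (hv : v ∈ A) :
    ∃ f ∈ S, ∃ v', G.inc f = s(v, v') ∧ G.IsTree A (S \ {f}) ∧
      ∀ x, G.IsLeaf (S \ {f}) x → x = v ∨ x = v' := by
  obtain ⟨f, hf, hvf⟩ := exists_mem_of_degOn_pos (v := v) (S := S)
    (by rw [hC.degOn_eq_two v hv]; exact two_pos)
  obtain ⟨v', hfv⟩ := exists_inc_eq_of_mem hvf
  have hT := hC.isTree_sdiff_singleton hf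
  refine ⟨f, hf, v', hfv, hT, fun x hx => ?_⟩
  obtain ⟨g, hg, hgf, hxg⟩ := exists_mem_notMem_of_degOn_lt (S := S \ {f}) (T := S) (v := x)
    (by rw [show G.degOn (S \ {f}) x = 1 from hx, hC.degOn_eq_two x (hT.mem_of_isLeaf hx)]
        exact one_lt_two)
  rw [show g = f by by_contra h; exact hgf ⟨hg, h⟩, hfv, Sym2.mem_iff] at hxg
  exact hxg

/-- If the cycle is odd, deleting an edge at `z` leaves a path whose ends are coloured like `z`. -/
lemma IsCycle.exists_properOn_or_exists_isTree (hC : G.IsCycle A S) (hz : z ∈ A) :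
    (∃ d : V → Bool, G.ProperOn S d ∧ d z = false) ∨
      ∃ T d, G.IsTree A T ∧ G.ProperOn T d ∧ d z = false ∧ ∀ x, G.IsLeaf T x → d x = false := by
  obtain ⟨f, hf, z', hfz, hT, hleaf⟩ := hC.exists_isTree_sdiff_singleton hz
  obtain ⟨d, hd, hdz⟩ := hT.exists_properOn hz false
  cases hdz' : d z'
  · exact .inr ⟨_, d, hT, hd, hdz, fun x hx => (hleaf x hx).elim (· ▸ hdz) (· ▸ hdz')⟩
  · refine .inl ⟨d, ?_, hdz⟩
    rw [← Set.insert_eq_of_mem hf, ← Set.insert_sdiff_singleton]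
    exact hd.insert hfz (by rw [hdz, hdz']; decide)

/-- Replacing the two cycle edges at `u` by a chord `uv` gives a spanning tree; recolouring `u`
makes the colouring proper on it, and its leaves are `u` and the two cycle neighbours of `u`. -/
lemma IsCycle.exists_isTree_update [DecidableEq V] (hC : G.IsCycle A S) (hd : G.ProperOn S d)
    (he : G.inc e = s(u, v)) (hu : u ∈ A) (hv : v ∈ A) (huv : d u = d v) :
    ∃ T, G.IsTree A T ∧ G.ProperOn T (Function.update d u (!d u)) ∧
      ∀ x, G.IsLeaf T x → Function.update d u (!d u) x = !d u := by
  obtain ⟨f₁, hf₁, u₁, hfu₁, hP, -⟩ := hC.exists_isTree_sdiff_singleton hu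
  have hu₁ : G.IsLeaf (S \ {f₁}) u := by
    have := degOn_sdiff_singleton_add_one hf₁ (by simp [hfu₁] : u ∈ G.inc f₁)
    rw [hC.degOn_eq_two u hu] at this
    exact Nat.succ_injective this
  obtain ⟨f₂, hf₂, hf₂u⟩ := exists_mem_of_degOn_pos (v := u) (S := S \ {f₁})
    (by rw [show G.degOn (S \ {f₁}) u = 1 from hu₁]; exact one_pos)
  have hQ := hP.sdiff_leaf hf₂ hf₂u hu₁
  have hvu : v ≠ u := (ne_of_inc_eq he).symm
  have hT : G.IsTree A (insert e ((S \ {f₁}) \ {f₂})) := by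
    have := hQ.attach (Set.notMem_sdiff_of_mem rfl) (he.trans Sym2.eq_swap) ⟨hv, hvu⟩
    rwa [Set.insert_sdiff_singleton, Set.insert_eq_of_mem hu] at this
  refine ⟨_, hT, ((hd.mono fun g hg => hg.1.1).update (fun g hg hug => (hQ.edges_in g hg u hug).2
    rfl) _).insert he (by simp [hvu, huv]), fun x hx => ?_⟩
  rcases eq_or_ne x u with rfl | hxu
  · simp
  obtain ⟨g, hgS, hgQ, hxg⟩ :=
    exists_mem_notMem_of_degOn_lt (S := (S \ {f₁}) \ {f₂}) (T := S) (v := x) (by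
      have := degOn_mono (Set.subset_insert e ((S \ {f₁}) \ {f₂})) (G := G) (v := x)
      rw [show G.degOn _ x = 1 from hx] at this
      rw [hC.degOn_eq_two x (hT.mem_of_isLeaf hx)]
      omega)
  have hug : u ∈ G.inc g := by
    by_contra h
    refine hgQ ⟨⟨hgS, ?_⟩, ?_⟩ <;> rintro rfl
    exacts [h (by simp [hfu₁]), h hf₂u]
  have := hd g hgS u x ((Sym2.mem_and_mem_iff hxu.symm).1 ⟨hug, hxg⟩)
  rw [Function.update_of_ne hxu]
  cases hdu : d u <;> simp_all

end Cycle

section WeaklyEven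

variable [Fintype V]

/-- Colour `false` is type 0. -/
def IsWeaklyEven (G : Multigraph V E) (S : Set E) (c : V → Bool) : Prop :=
  ∀ v : V, G.IsLeaf S v → G.degree v = G.maxDegree → c v = false

structure IsGoodWeaklyEvenTree (G : Multigraph V E) (F : Set E) (w : V) (lam : Bool) (U : Set V)
    (S : Set E) (c : V → Bool) : Prop where
  mem : w ∈ U
  isTree : G.IsTree U S
  good : ∀ u ∈ U, ∀ v : V, G.ReachOn F u v → v ∈ U
  properOn : G.ProperOn S c
  apply_eq : c w = lam
  isWeaklyEven : G.IsWeaklyEven S c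

variable {F : Set E}

lemma IsWeakTwoFactor.isWeaklyEven_componentEdges (hF : G.IsWeakTwoFactor F) (z : V)
    (d : V → Bool) : G.IsWeaklyEven (G.componentEdges F z) d := by
  intro x hx hxΔ
  obtain ⟨e, he, hxe⟩ := exists_mem_of_degOn_pos (v := x) (S := G.componentEdges F z)
    (by rw [show G.degOn _ x = 1 from hx]; exact one_pos)
  have h1 : G.degOn F x = 1 :=
    (degOn_componentEdges (reachOn_of_mem_componentEdges he hxe)).symm.trans hx
  exact absurd hxΔ ((hF x).2 (by omega)).ne

lemma IsGoodWeaklyEvenTree.join [Finite E] {w : V} {lam : Bool} {U C : Set V}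
    {S T : Set E} {c d : V → Bool} [DecidablePred (· ∈ C)]
    (hU : G.IsGoodWeaklyEvenTree F w lam U S c) (hF : G.IsWeakTwoFactor F) (hT : G.IsTree C T)
    (hCF : ∀ u ∈ C, ∀ v : V, G.ReachOn F u v → v ∈ C) (hUC : Disjoint U C) {y z : V} {e : E}
    (he : G.inc e = s(y, z)) (hy : y ∈ U) (hcy : c y = true) (hzC : z ∈ C)
    (hd : G.ProperOn T d) (hdz : d z = false) (hev : G.IsWeaklyEven T d) :
    G.IsGoodWeaklyEvenTree F w lam (U ∪ C) (insert e (S ∪ T)) (C.piecewise d c) := by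
  have hyC : y ∉ C := Set.disjoint_left.1 hUC hy
  have hSC : ∀ g ∈ S, ∀ v ∈ G.inc g, v ∉ C :=
    fun g hg v hv => Set.disjoint_left.1 hUC (hU.isTree.edges_in g hg v hv)
  refine ⟨.inl hU.mem, hU.isTree.union_insert hT hUC he hy hzC, ?_, ?_, ?_, ?_⟩
  · rintro u (hu | hu) v huv
    exacts [.inl (hU.good u hu v huv), .inr (hCF u hu v huv)]
  · refine (hU.properOn.union_piecewise hd hSC hT.edges_in).insert he ?_
    rw [Set.piecewise_eq_of_notMem _ _ _ hyC, Set.piecewise_eq_of_mem _ _ _ hzC, hcy, hdz]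
    decide
  · rw [Set.piecewise_eq_of_notMem _ _ _ (Set.disjoint_left.1 hUC hU.mem), hU.apply_eq]
  intro v hv hvΔ
  have hv1 : G.degOn (insert e (S ∪ T)) v = 1 := hv
  by_cases hvC : v ∈ C
  · rw [Set.piecewise_eq_of_mem _ _ _ hvC]
    rcases eq_or_ne v z with rfl | hvz
    · exact hdz
    refine hev v ((degOn_congr fun g hvg => ⟨?_, fun hg => .inr (.inr hg)⟩).symm.trans hv1) hvΔ
    rintro (rfl | hg | hg)
    · rw [he, Sym2.mem_iff] at hvg
      exact hvg.elim (fun h => absurd (h ▸ hvC) hyC) (absurd · hvz)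
    · exact absurd hvC (hSC g hg v hvg)
    · exact hg
  · rw [Set.piecewise_eq_of_notMem _ _ _ hvC]
    rcases eq_or_ne v y with rfl | hvy
    · -- `y` is then the only vertex of `U`, so goodness leaves it without `F`-edges.
      have heS : e ∉ S := fun h =>
        Set.disjoint_left.1 hUC (hU.isTree.edges_in e h z (by simp [he])) hzC
      have h0 : G.degOn S v = 0 := by
        have := degOn_mono (G := G) (v := v)
          (Set.insert_subset_insert (Set.subset_union_left (s := S) (t := T)) (a := e))
        rw [degOn_insert heS (by simp [he])] at this
        omega
      have hF0 := hU.isTree.degOn_eq_zero_of_closed hU.good hy h0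
      exact absurd hvΔ ((hF v).2 (by omega)).ne
    refine hU.isWeaklyEven v ((degOn_congr fun g hvg => ⟨?_, fun hg => .inr (.inl hg)⟩).symm.trans
      hv1) hvΔ
    rintro (rfl | hg | hg)
    · rw [he, Sym2.mem_iff] at hvg
      exact hvg.elim (absurd · hvy) (fun h => absurd (h ▸ hzC) hvC)
    · exact hg
    · exact absurd (hT.edges_in g hg v hvg) hvC

lemma IsGoodWeaklyEvenTree.not_isWeaklyEven_component [Finite E] {w : V} {lam : Bool}
    {U : Set V} {S T : Set E} {c d : V → Bool} (hU : G.IsGoodWeaklyEvenTree F w lam U S c)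
    (hmax : ∀ U' S' c', G.IsGoodWeaklyEvenTree F w lam U' S' c' → U'.ncard ≤ U.ncard)
    (hF : G.IsWeakTwoFactor F) {y z : V} {e : E} (he : G.inc e = s(y, z)) (hy : y ∈ U)
    (hcy : c y = true) (hz : z ∉ U) (hT : G.IsTree {x | G.ReachOn F z x} T)
    (hd : G.ProperOn T d) (hdz : d z = false) : ¬ G.IsWeaklyEven T d := by
  classical
  intro hev
  have hzC : z ∈ {x | G.ReachOn F z x} := ReachOn.refl
  have hUC : Disjoint U {x | G.ReachOn F z x} :=
    Set.disjoint_left.2 fun x hxU hxC => hz (hU.good x hxU z (ReachOn.symm hxC))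
  refine (hmax _ _ _ (hU.join hF hT (fun u hu v huv => ReachOn.trans hu huv) hUC he hy hcy hzC hd
    hdz hev)).not_gt (Set.ncard_lt_ncard ?_)
  exact (Set.ssubset_iff_of_subset Set.subset_union_left).2 ⟨z, .inr hzC, hz⟩

end WeaklyEven

end Multigraph

open Multigraph

theorem component_of_outside_neighbour_even_cycle_general {V E : Type} [Fintype V] [Fintype E]
    (G : Multigraph V E)
    (F : Set E) (hF : G.IsWeakTwoFactor F) (w : V) (lam : Bool)
    (U : Set V) (S : Set E) (c : V → Bool)
    (hwU : w ∈ U) (htree : G.IsTree U S)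
    (hgood : ∀ u ∈ U, ∀ v : V, G.ReachOn F u v → v ∈ U)
    (hc : G.ProperOn S c) (hcw : c w = lam)
    (hwe : ∀ v : V, G.IsLeaf S v → G.degree v = G.maxDegree → c v = false)
    (hmax : ∀ (U' : Set V) (S' : Set E) (c' : V → Bool),
      w ∈ U' → G.IsTree U' S' →
      (∀ u ∈ U', ∀ v : V, G.ReachOn F u v → v ∈ U') →
      G.ProperOn S' c' → c' w = lam →
      (∀ v : V, G.IsLeaf S' v → G.degree v = G.maxDegree → c' v = false) →
      U'.ncard ≤ U.ncard)
    (y0 z : V) (e' : E) (he' : G.inc e' = s(y0, z))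
    (hy0 : y0 ∈ U) (hy0c : c y0 = true) (hz : z ∉ U) :
    (∀ v ∈ {x : V | G.ReachOn F z x}, G.degOn F v = 2) ∧
    (∃ d : V → Bool, d z = false ∧
      ∀ e ∈ F, ∀ u v : V, G.inc e = s(u, v) → u ∈ {x : V | G.ReachOn F z x} → d u ≠ d v) ∧
    (∀ d : V → Bool, d z = false →
      (∀ e ∈ F, ∀ u v : V, G.inc e = s(u, v) → u ∈ {x : V | G.ReachOn F z x} → d u ≠ d v) →
      (∀ v ∈ {x : V | G.ReachOn F z x}, d v = true → G.degree v = G.maxDegree) ∧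
      (∀ (e : E) (u v : V), G.inc e = s(u, v) →
        u ∈ {x : V | G.ReachOn F z x} → d u = true →
        v ∈ {x : V | G.ReachOn F z x} → d v = true → False)) := by
  classical
  have hT : G.IsGoodWeaklyEvenTree F w lam U S c := ⟨hwU, htree, hgood, hc, hcw, hwe⟩
  have hzC : z ∈ {x | G.ReachOn F z x} := ReachOn.refl
  have key : ∀ T d, G.IsTree {x | G.ReachOn F z x} T → G.ProperOn T d → d z = false →
      G.IsWeaklyEven T d → False := fun T d hCT hd hdz =>
    hT.not_isWeaklyEven_component (fun U' S' c' h => hmax U' S' c' h.1 h.2 h.3 h.4 h.5 h.6) hF he'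
      hy0 hy0c hz hCT hd hdz
  have hdeg : ∀ v ∈ {x | G.ReachOn F z x}, G.degOn F v = 2 := by
    by_contra! ⟨v, hv, hv2⟩
    have hCT :=
      isTree_component_of_degOn_lt_two (fun v => (hF v).1) hv (lt_of_le_of_ne (hF v).1 hv2)
    obtain ⟨d, hd, hdz⟩ := hCT.exists_properOn hzC false
    exact key _ d hCT hd hdz (hF.isWeaklyEven_componentEdges z d)
  have hcyc := isCycle_component hdeg
  refine ⟨hdeg, ?_, fun d hdz hd => ?_⟩
  · rcases hcyc.exists_properOn_or_exists_isTree hzC with ⟨d, hd, hdz⟩ | ⟨T, d, hCT, hd, hdz, hleaf⟩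
    · exact ⟨d, hdz, properOn_componentEdges_iff.1 hd⟩
    · exact (key T d hCT hd hdz fun x hx _ => hleaf x hx).elim
  rw [← properOn_componentEdges_iff] at hd
  refine ⟨fun v hv hdv => ?_, fun e u v he hu hdu hv hdv => ?_⟩
  · by_contra hΔ
    obtain ⟨f, hf, v', hfv, hCT, hleaf⟩ := hcyc.exists_isTree_sdiff_singleton hv
    refine key _ d hCT (hd.mono Set.sdiff_subset) hdz fun x hx hxΔ => ?_
    rcases hleaf x hx with rfl | rfl
    · exact absurd hxΔ hΔ
    · simpa [hdv] using (hd f hf v x hfv).symm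
  · obtain ⟨T, hCT, hd', hleaf⟩ := hcyc.exists_isTree_update hd he hu hv (hdu.trans hdv.symm)
    have hzu : z ≠ u := by rintro rfl; rw [hdz] at hdu; exact Bool.false_ne_true hdu
    exact key T _ hCT hd' (by rw [Function.update_of_ne hzu, hdz])
      fun x hx _ => by simpa [hdu] using hleaf x hx

/-- Let `G` be a 2-edge-connected non-regular multigraph, `F`
a weak 2-factor of `G`, `w ∈ V(G)` and `lam ∈ {0,1}` (with `false` for type 0
and `true` for type 1). Let `T` (vertex set `U`, edge set `S`) be a good weakly
even `(w, lam)`-tree of maximum order, with `(w, lam)`-bipartition given by the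
proper 2-colouring `c` (so `Y₀ = {v ∈ U | c v = true}`), and suppose
`U ≠ V(G)`. Suppose some edge of `G` joins `y0 ∈ Y₀` to `z ∉ U`. Then the
component `C = {v | z ⟶F v}` of `F` containing `z` is an even cycle (every
vertex of `C` has degree 2 in `F`, and `C` admits a proper 2-colouring with
`z` of type 0); moreover for the bipartition `(X, Y)` of `C` with `z ∈ X`
(given by a proper 2-colouring `d` of `C` with `d z = false`, where
`Y = {v ∈ C | d v = true}`), every vertex of `Y` has degree `Δ(G)` in `G` and
`Y` is an independent set in `G`. -/
theorem component_of_outside_neighbour_even_cycle {V E : Type} [Fintype V] [Fintype E]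
    (G : Multigraph V E) (h2ec : G.TwoEdgeConnected) (hnreg : ¬ G.IsRegular)
    (F : Set E) (hF : G.IsWeakTwoFactor F) (w : V) (lam : Bool)
    (U : Set V) (S : Set E) (c : V → Bool)
    (hwU : w ∈ U) (htree : G.IsTree U S)
    (hgood : ∀ u ∈ U, ∀ v : V, G.ReachOn F u v → v ∈ U)
    (hc : G.ProperOn S c) (hcw : c w = lam)
    (hwe : ∀ v : V, G.IsLeaf S v → G.degree v = G.maxDegree → c v = false)
    (hmax : ∀ (U' : Set V) (S' : Set E) (c' : V → Bool),
      w ∈ U' → G.IsTree U' S' →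
      (∀ u ∈ U', ∀ v : V, G.ReachOn F u v → v ∈ U') →
      G.ProperOn S' c' → c' w = lam →
      (∀ v : V, G.IsLeaf S' v → G.degree v = G.maxDegree → c' v = false) →
      U'.ncard ≤ U.ncard)
    (hne : U ≠ Set.univ)
    (y0 z : V) (e' : E) (he' : G.inc e' = s(y0, z))
    (hy0 : y0 ∈ U) (hy0c : c y0 = true) (hz : z ∉ U) :
    (∀ v ∈ {x : V | G.ReachOn F z x}, G.degOn F v = 2) ∧
    (∃ d : V → Bool, d z = false ∧
      ∀ e ∈ F, ∀ u v : V, G.inc e = s(u, v) → u ∈ {x : V | G.ReachOn F z x} → d u ≠ d v) ∧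
    (∀ d : V → Bool, d z = false →
      (∀ e ∈ F, ∀ u v : V, G.inc e = s(u, v) → u ∈ {x : V | G.ReachOn F z x} → d u ≠ d v) →
      (∀ v ∈ {x : V | G.ReachOn F z x}, d v = true → G.degree v = G.maxDegree) ∧
      (∀ (e : E) (u v : V), G.inc e = s(u, v) →
        u ∈ {x : V | G.ReachOn F z x} → d u = true →
        v ∈ {x : V | G.ReachOn F z x} → d v = true → False)) :=
  component_of_outside_neighbour_even_cycle_general G F hF w lam U S c hwU htree hgood hc hcw hwe
    hmax y0 z e' he' hy0 hy0c hz
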